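/- Consider I agents arranged in a directed ring, where agent i's generator at equilibrium satisfies f_i^g = (f_i + f_{σ^{-1}(i)}^g)/2 with σ the ring's successor permutation, interpreted as the fixed-point condition over all i simultaneously. If a solution exists with all f_i^g probability densities, then each f_i^g is a convex combination of f_1, …, f_I with weights w_k = 2^{-d_k}/(1 − 2^{-I}) where d_k ∈ {1, …, I} is the ring distance from k to i; in particular, all weights are strictly positive, so every f_i^g has support covering the union of supports of all f_k. -/
import Mathlib


/-- The ring distance from `k` to `i` along the cycle `σ`, counted so that it
takes values in `{1, …, I}`: the least `m ≥ 1` with `σ^(m-1) k = i` (so `k = i`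
has distance `1` and each further hop backwards along the ring adds one). -/
noncomputable def ringDist {n : ℕ} (σ : Equiv.Perm (Fin n)) (k i : Fin n) : ℕ :=
  sInf {m : ℕ | 1 ≤ m ∧ (σ ^ (m - 1)) k = i}

theorem stmt17_aux {n : ℕ} {Ω : Type*} (hn : 2 ≤ n) (σ : Equiv.Perm (Fin n))
    (hcyc : σ.IsCycle) (hsupp : σ.support = Finset.univ)
    (f g : Fin n → Ω → ℝ) (hf : ∀ k s, 0 ≤ f k s)
    (hfix : ∀ i s, g i s = (f i s + g (σ⁻¹ i) s) / 2) :
    (∀ k i : Fin n, 0 < ((1 / 2 : ℝ) ^ (sInf {m : ℕ | 1 ≤ m ∧ (σ ^ (m - 1)) k = i})) / (1 - (1 / 2) ^ n)) ∧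
    (∀ i s, g i s =
      ∑ k : Fin n,
        (((1 / 2 : ℝ) ^ (sInf {m : ℕ | 1 ≤ m ∧ (σ ^ (m - 1)) k = i})) / (1 - (1 / 2) ^ n)) * f k s) ∧
    (∀ i s, (∃ k, 0 < f k s) → 0 < g i s) := by
  have hn0 : 0 < n := by omega
  have hc : (0:ℝ) < 1 - (1/2)^n := by
    have : (1/2:ℝ)^n < 1 := pow_lt_one₀ (by norm_num) (by norm_num) (by omega)
    linarith
  have hord : orderOf σ = n := by
    rw [hcyc.orderOf, hsupp, Finset.card_univ, Fintype.card_fin]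
  -- σ^m fixes a point iff n ∣ m
  have hfix_pt : ∀ (m : ℕ) (k : Fin n), (σ ^ m) k = k ↔ n ∣ m := by
    intro m k
    constructor
    · intro h
      have hk : σ k ≠ k := by
        have : k ∈ σ.support := by rw [hsupp]; exact Finset.mem_univ k
        exact Equiv.Perm.mem_support.mp this
      have : σ ^ m = 1 := hcyc.pow_eq_one_iff.mpr ⟨k, hk, h⟩
      rw [← hord]; exact orderOf_dvd_of_pow_eq_one this
    · intro h
      have : σ ^ m = 1 := by
        rw [← hord] at h; exact orderOf_dvd_iff_pow_eq_one.mp h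
      simp [this]
  -- congruence: σ^a k = σ^b k → a ≡ b mod n
  have hcong : ∀ (a b : ℕ) (k : Fin n), (σ ^ a) k = (σ ^ b) k → a % n = b % n := by
    intro a b k h
    wlog hab : b ≤ a generalizing a b
    · exact (this b a h.symm (by omega)).symm
    have : (σ ^ (a - b)) ((σ ^ b) k) = (σ ^ b) k := by
      rw [← Equiv.Perm.mul_apply, ← pow_add]
      rw [Nat.sub_add_cancel hab]; exact h
    have hd : n ∣ a - b := (hfix_pt _ _).mp this
    exact ((Nat.modEq_iff_dvd' hab).mpr hd).symm
  -- ring distance of σ⁻ʲ i to i is j+1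
  have hrd : ∀ (j : ℕ) (i : Fin n), j < n →
      sInf {m : ℕ | 1 ≤ m ∧ (σ ^ (m - 1)) ((σ⁻¹ ^ j) i) = i} = j + 1 := by
    intro j i hj
    have hmem : j + 1 ∈ {m : ℕ | 1 ≤ m ∧ (σ ^ (m - 1)) ((σ⁻¹ ^ j) i) = i} := by
      refine ⟨by omega, ?_⟩
      simp only [Nat.add_sub_cancel]
      rw [← Equiv.Perm.mul_apply, inv_pow]
      simp
    refine le_antisymm (Nat.sInf_le hmem) ?_
    have hmem' := Nat.sInf_mem ⟨j + 1, hmem⟩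
    obtain ⟨h1, h2⟩ := hmem'
    set m := sInf {m : ℕ | 1 ≤ m ∧ (σ ^ (m - 1)) ((σ⁻¹ ^ j) i) = i}
    have hji : (σ ^ j) ((σ⁻¹ ^ j) i) = i := by
      rw [← Equiv.Perm.mul_apply, inv_pow]; simp
    have hm := hcong (m - 1) j ((σ⁻¹ ^ j) i) (by rw [h2, hji])
    have hle : (m - 1) % n ≤ m - 1 := Nat.mod_le _ _
    rw [hm, Nat.mod_eq_of_lt hj] at hle
    omega
  -- iteration lemma
  have hiter : ∀ (i : Fin n) (s : Ω) (m : ℕ), g i s =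
      (∑ j ∈ Finset.range m, (1/2:ℝ)^(j+1) * f ((σ⁻¹ ^ j) i) s)
        + (1/2:ℝ)^m * g ((σ⁻¹ ^ m) i) s := by
    intro i s m
    induction m with
    | zero => simp
    | succ m ih =>
      rw [ih, Finset.sum_range_succ]
      have h := hfix ((σ⁻¹ ^ m) i) s
      have hp : σ⁻¹ ((σ⁻¹ ^ m) i) = (σ⁻¹ ^ (m+1)) i := by
        rw [pow_succ']; rfl
      rw [hp] at h
      rw [h]; ring
  -- the key closed form
  have hmain : ∀ (i : Fin n) (s : Ω), g i s =
      ∑ k : Fin n,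
        (((1 / 2 : ℝ) ^ (sInf {m : ℕ | 1 ≤ m ∧ (σ ^ (m - 1)) k = i})) / (1 - (1 / 2) ^ n)) * f k s := by
    intro i s
    have h := hiter i s n
    have hid : (σ⁻¹ ^ n) i = i := by
      have h1 : σ ^ n = 1 := by
        have := pow_orderOf_eq_one σ; rwa [hord] at this
      rw [inv_pow, h1, inv_one]; rfl
    rw [hid] at h
    have hg : g i s = (∑ j ∈ Finset.range n, (1/2:ℝ)^(j+1) * f ((σ⁻¹ ^ j) i) s) / (1 - (1/2)^n) := by
      rw [eq_div_iff (ne_of_gt hc)]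
      linear_combination h
    rw [hg]
    -- reindex: bijection j ↦ σ⁻ʲ i from Fin n to Fin n
    have hinj : Function.Injective (fun j : Fin n => (σ⁻¹ ^ (j:ℕ)) i) := by
      intro a b hab
      simp only at hab
      have h1 : (σ ^ (a:ℕ)) ((σ⁻¹ ^ (a:ℕ)) i) = i := by
        rw [← Equiv.Perm.mul_apply, inv_pow]; simp
      have h2 : (σ ^ (b:ℕ)) ((σ⁻¹ ^ (b:ℕ)) i) = i := by
        rw [← Equiv.Perm.mul_apply, inv_pow]; simp
      have hm := hcong (a:ℕ) (b:ℕ) ((σ⁻¹ ^ (b:ℕ)) i) (by rw [h2, ← hab, h1])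
      rw [Nat.mod_eq_of_lt a.isLt, Nat.mod_eq_of_lt b.isLt] at hm
      exact Fin.ext hm
    have hbij : Function.Bijective (fun j : Fin n => (σ⁻¹ ^ (j:ℕ)) i) :=
      (Finite.injective_iff_bijective).mp hinj
    rw [← Function.Bijective.sum_comp hbij
      (fun k => (((1 / 2 : ℝ) ^ (sInf {m : ℕ | 1 ≤ m ∧ (σ ^ (m - 1)) k = i})) / (1 - (1 / 2) ^ n)) * f k s)]
    rw [Finset.sum_div, ← Fin.sum_univ_eq_sum_range
      (fun j => (1/2:ℝ)^(j+1) * f ((σ⁻¹ ^ j) i) s / (1 - (1/2)^n))]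
    refine Finset.sum_congr rfl fun j _ => ?_
    rw [hrd (j:ℕ) i j.isLt]
    ring
  refine ⟨fun k i => div_pos (pow_pos (by norm_num) _) hc, hmain, ?_⟩
  intro i s ⟨k, hk⟩
  rw [hmain i s]
  refine Finset.sum_pos' (fun k _ => mul_nonneg (le_of_lt (div_pos (pow_pos (by norm_num) _) hc)) (hf k s)) ?_
  exact ⟨k, Finset.mem_univ k, mul_pos (div_pos (pow_pos (by norm_num) _) hc) hk⟩


/-- Consider `I` agents on a directed ring with successor permutation `σ`, whose
equilibrium generators satisfy `f_i^g = (f_i + f_{σ⁻¹ i}^g)/2` simultaneously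
for all `i`.  Then each `f_i^g` is a convex combination of `f_1, …, f_I` with
weights `2^{-d_k}/(1 - 2^{-I})`, `d_k ∈ {1, …, I}` the ring distance from `k`
to `i`; all weights are strictly positive, so every `f_i^g` has support
covering the union of the supports of the `f_k`. -/
theorem stmt17 {n : ℕ} {Ω : Type*} (hn : 2 ≤ n) (σ : Equiv.Perm (Fin n))
    (hcyc : σ.IsCycle) (hsupp : σ.support = Finset.univ)
    (f g : Fin n → Ω → ℝ) (hf : ∀ k s, 0 ≤ f k s)
    (hfix : ∀ i s, g i s = (f i s + g (σ⁻¹ i) s) / 2) :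
    (∀ k i : Fin n, 0 < ((1 / 2 : ℝ) ^ ringDist σ k i) / (1 - (1 / 2) ^ n)) ∧
    (∀ i s, g i s =
      ∑ k : Fin n,
        (((1 / 2 : ℝ) ^ ringDist σ k i) / (1 - (1 / 2) ^ n)) * f k s) ∧
    (∀ i s, (∃ k, 0 < f k s) → 0 < g i s) := by
  unfold ringDist
  exact stmt17_aux hn σ hcyc hsupp f g hf hfix
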